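/- Let T ⊆ ℝⁿ be a brick and A ⊆ T a Jordan measurable set. Then the characteristic function χ_A : T → ℝ is K-integrable and ∫_T χ_A equals the Jordan measure (Jordan content) of A. -/

import Mathlib

open Set Filter MeasureTheory Topology

/-- A brick in ℝⁿ: a product of `n` bounded intervals. -/
def IsBrick {n : ℕ} (S : Set (Fin n → ℝ)) : Prop :=
  ∃ I : Fin n → Set ℝ,
    (∀ k, (I k).OrdConnected ∧ Bornology.IsBounded (I k)) ∧ S = Set.univ.pi I

/-- The volume of a brick: the product of the lengths of its sides. -/
noncomputable def brickVol {n : ℕ} (S : Set (Fin n → ℝ)) : ℝ :=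
  ∏ k : Fin n, (sSup ((fun x => x k) '' S) - sInf ((fun x => x k) '' S))

/-- A representation of a step function on `T`: a finite linear combination of
characteristic functions of bricks contained in `T`. -/
structure StepRepr {n : ℕ} (T : Set (Fin n → ℝ)) where
  M : ℕ
  c : Fin M → ℝ
  B : Fin M → Set (Fin n → ℝ)
  isBrick : ∀ j, IsBrick (B j)
  subset : ∀ j, B j ⊆ T

/-- The step function determined by a representation. -/
noncomputable def StepRepr.fn {n : ℕ} {T : Set (Fin n → ℝ)} (g : StepRepr T) :
    (Fin n → ℝ) → ℝ :=
  fun x => ∑ j, g.c j * (g.B j).indicator (fun _ => (1 : ℝ)) x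

/-- The integral of a step function. -/
noncomputable def StepRepr.integral {n : ℕ} {T : Set (Fin n → ℝ)} (g : StepRepr T) : ℝ :=
  ∑ j, g.c j * brickVol (g.B j)

/-- The sequence `F` converges nearly uniformly to `f` on `T`: it is uniformly bounded
on `T`, and for every `δ > 0` there are finitely many bricks (contained in `T`) of total
volume `< δ` such that `F` converges uniformly to `f` on the complement of their union. -/
def NearlyUniformlyTo {n : ℕ} (T : Set (Fin n → ℝ)) (F : ℕ → (Fin n → ℝ) → ℝ)
    (f : (Fin n → ℝ) → ℝ) : Prop :=
  (∃ C : ℝ, ∀ m, ∀ x ∈ T, |F m x| ≤ C) ∧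
  ∀ δ > (0 : ℝ), ∃ (M : ℕ) (B : Fin M → Set (Fin n → ℝ)),
    (∀ j, IsBrick (B j) ∧ B j ⊆ T) ∧ (∑ j, brickVol (B j)) < δ ∧
    TendstoUniformlyOn F f atTop (T \ ⋃ j, B j)

/-- `f` is K-integrable on `T`: some sequence of step functions converges nearly
uniformly to `f`. -/
def KIntegrable {n : ℕ} (T : Set (Fin n → ℝ)) (f : (Fin n → ℝ) → ℝ) : Prop :=
  ∃ g : ℕ → StepRepr T, NearlyUniformlyTo T (fun m => (g m).fn) f

/-- `f` is K-integrable on `T` with K-integral `I`: some sequence of step functions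
converges nearly uniformly to `f` and their integrals tend to `I`. -/
def HasKIntegral {n : ℕ} (T : Set (Fin n → ℝ)) (f : (Fin n → ℝ) → ℝ) (I : ℝ) : Prop :=
  ∃ g : ℕ → StepRepr T, NearlyUniformlyTo T (fun m => (g m).fn) f ∧
    Filter.Tendsto (fun m => (g m).integral) Filter.atTop (nhds I)

/-- A Jordan null set: for each `ε > 0` it can be covered by finitely many bricks of
total volume less than `ε`. -/
def JordanNull {n : ℕ} (A : Set (Fin n → ℝ)) : Prop :=
  ∀ ε > (0 : ℝ), ∃ (M : ℕ) (B : Fin M → Set (Fin n → ℝ)),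
    (∀ j, IsBrick (B j)) ∧ A ⊆ (⋃ j, B j) ∧ (∑ j, brickVol (B j)) < ε

/-- The outer Jordan content of a set: the infimum of the total volumes of finite
coverings by bricks. For a Jordan measurable set this is the Jordan measure. -/
noncomputable def jordanOuterContent {n : ℕ} (A : Set (Fin n → ℝ)) : ℝ :=
  sInf {v : ℝ | ∃ (M : ℕ) (B : Fin M → Set (Fin n → ℝ)),
    (∀ j, IsBrick (B j)) ∧ A ⊆ (⋃ j, B j) ∧ v = ∑ j, brickVol (B j)}

section Aux

variable {n : ℕ}

theorem IsBrick.isBounded {S : Set (Fin n → ℝ)} (h : IsBrick S) : Bornology.IsBounded S := by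
  obtain ⟨I, hI, rfl⟩ := h
  exact Bornology.IsBounded.pi fun k => (hI k).2

theorem IsBrick.measurableSet {S : Set (Fin n → ℝ)} (h : IsBrick S) : MeasurableSet S := by
  obtain ⟨I, hI, rfl⟩ := h
  exact MeasurableSet.univ_pi fun k => (hI k).1.measurableSet

theorem IsBrick.inter {S S' : Set (Fin n → ℝ)} (h : IsBrick S) (h' : IsBrick S') :
    IsBrick (S ∩ S') := by
  obtain ⟨I, hI, rfl⟩ := h
  obtain ⟨I', hI', rfl⟩ := h'
  exact ⟨fun k => I k ∩ I' k,
    fun k => ⟨(hI k).1.inter (hI' k).1, (hI k).2.subset inter_subset_left⟩,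
    (pi_inter_distrib).symm⟩

theorem isBrick_empty (hn : 1 ≤ n) : IsBrick (∅ : Set (Fin n → ℝ)) :=
  ⟨fun _ => ∅, fun _ => ⟨ordConnected_empty, Bornology.isBounded_empty⟩,
    (Set.univ_pi_eq_empty_iff.mpr ⟨⟨0, hn⟩, rfl⟩).symm⟩

theorem vol_of_ordConnected {S : Set ℝ} (hoc : S.OrdConnected) (hb : Bornology.IsBounded S)
    (hne : S.Nonempty) : volume S = ENNReal.ofReal (sSup S - sInf S) := by
  have hba : BddAbove S := hb.bddAbove
  have hbb : BddBelow S := hb.bddBelow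
  have h1 : S ⊆ Icc (sInf S) (sSup S) := fun x hx => ⟨csInf_le hbb hx, le_csSup hba hx⟩
  have h2 : Ioo (sInf S) (sSup S) ⊆ S := by
    intro x hx
    obtain ⟨y, hy, hyx⟩ := exists_lt_of_csInf_lt hne hx.1
    obtain ⟨z, hz, hxz⟩ := exists_lt_of_lt_csSup hne hx.2
    exact hoc.out hy hz ⟨hyx.le, hxz.le⟩
  refine le_antisymm ?_ ?_
  · calc volume S ≤ volume (Icc (sInf S) (sSup S)) := measure_mono h1
      _ = ENNReal.ofReal (sSup S - sInf S) := Real.volume_Icc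
  · calc ENNReal.ofReal (sSup S - sInf S) = volume (Ioo (sInf S) (sSup S)) :=
        Real.volume_Ioo.symm
      _ ≤ volume S := measure_mono h2

theorem IsBrick.brickVol_eq (hn : 1 ≤ n) {S : Set (Fin n → ℝ)} (h : IsBrick S) :
    brickVol S = (volume S).toReal := by
  obtain ⟨I, hI, rfl⟩ := h
  rcases (univ.pi I).eq_empty_or_nonempty with he | hne
  · rw [he]
    have hne' : Nonempty (Fin n) := Fin.pos_iff_nonempty.mp hn
    obtain ⟨k⟩ := hne'
    unfold brickVol
    rw [measure_empty, ENNReal.toReal_zero]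
    refine Finset.prod_eq_zero (Finset.mem_univ k) ?_
    simp [Real.sSup_empty, Real.sInf_empty]
  · have hIk : ∀ k, (I k).Nonempty := by
      obtain ⟨x, hx⟩ := hne
      exact fun k => ⟨x k, hx k (mem_univ k)⟩
    have himg : ∀ k : Fin n, (fun x : Fin n → ℝ => x k) '' (univ.pi I) = I k := fun k =>
      eval_image_pi (mem_univ k) hne
    unfold brickVol
    simp only [himg]
    rw [volume_pi_pi, ENNReal.toReal_prod]
    refine Finset.prod_congr rfl fun k _ => ?_
    rw [vol_of_ordConnected (hI k).1 (hI k).2 (hIk k),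
      ENNReal.toReal_ofReal
        (sub_nonneg.mpr (csInf_le_csSup (hIk k) (hI k).2.bddBelow (hI k).2.bddAbove))]

theorem IsBrick.brickVol_nonneg (hn : 1 ≤ n) {S : Set (Fin n → ℝ)} (h : IsBrick S) :
    0 ≤ brickVol S := by
  rw [h.brickVol_eq hn]; exact ENNReal.toReal_nonneg

theorem IsBrick.volume_lt_top {S : Set (Fin n → ℝ)} (h : IsBrick S) : volume S < ⊤ :=
  h.isBounded.measure_lt_top

theorem IsBrick.brickVol_mono (hn : 1 ≤ n) {S S' : Set (Fin n → ℝ)} (h : IsBrick S)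
    (h' : IsBrick S') (hss : S ⊆ S') : brickVol S ≤ brickVol S' := by
  rw [h.brickVol_eq hn, h'.brickVol_eq hn]
  exact ENNReal.toReal_mono h'.volume_lt_top.ne (measure_mono hss)

/-! ### Grid pieces -/

/-- The index of the piece of the grid `G` containing `x`. -/
noncomputable def pieceIdx (G : Finset ℝ) (x : ℝ) : ℕ := (G.filter (· ≤ x)).card

/-- The `i`-th piece of the grid `G`. -/
noncomputable def piece (G : Finset ℝ) (i : ℕ) : Set ℝ := {x | pieceIdx G x = i}

theorem pieceIdx_lt (G : Finset ℝ) (x : ℝ) : pieceIdx G x < G.card + 1 :=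
  Nat.lt_succ_of_le (Finset.card_filter_le _ _)

theorem monotone_pieceIdx (G : Finset ℝ) : Monotone (pieceIdx G) := fun x y hxy =>
  Finset.card_le_card (fun g hg => by
    rw [Finset.mem_filter] at hg ⊢; exact ⟨hg.1, hg.2.trans hxy⟩)

theorem mem_piece_self (G : Finset ℝ) (x : ℝ) : x ∈ piece G (pieceIdx G x) := rfl

theorem piece_ordConnected (G : Finset ℝ) (i : ℕ) : (piece G i).OrdConnected := by
  constructor
  intro x hx z hz y hy
  have h1 : pieceIdx G x ≤ pieceIdx G y := monotone_pieceIdx G hy.1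
  have h2 : pieceIdx G y ≤ pieceIdx G z := monotone_pieceIdx G hy.2
  have hx' : pieceIdx G x = i := hx
  have hz' : pieceIdx G z = i := hz
  show pieceIdx G y = i
  omega

theorem piece_subset_Ico {G : Finset ℝ} {α β : ℝ} (hα : α ∈ G) (hβ : β ∈ G) {i : ℕ}
    {x : ℝ} (hx : x ∈ piece G i) (hx' : x ∈ Ico α β) {y : ℝ} (hy : y ∈ piece G i) :
    y ∈ Ico α β := by
  have hxi : pieceIdx G x = i := hx
  have hyi : pieceIdx G y = i := hy
  constructor
  · by_contra hlt
    push_neg at hlt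
    have hsub : G.filter (· ≤ y) ⊆ G.filter (· ≤ x) := by
      intro g hg
      rw [Finset.mem_filter] at hg ⊢
      exact ⟨hg.1, le_trans (le_of_lt (lt_of_le_of_lt hg.2 hlt)) hx'.1⟩
    have hmemx : α ∈ G.filter (· ≤ x) := Finset.mem_filter.mpr ⟨hα, hx'.1⟩
    have hmemy : α ∉ G.filter (· ≤ y) := fun hmem =>
      absurd (Finset.mem_filter.mp hmem).2 (not_le.mpr hlt)
    have hss : G.filter (· ≤ y) ⊂ G.filter (· ≤ x) :=
      (Finset.ssubset_iff_of_subset hsub).mpr ⟨α, hmemx, hmemy⟩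
    have hcard : pieceIdx G y < pieceIdx G x := Finset.card_lt_card hss
    omega
  · by_contra hle
    push_neg at hle
    have hsub : G.filter (· ≤ x) ⊆ G.filter (· ≤ y) := by
      intro g hg
      rw [Finset.mem_filter] at hg ⊢
      exact ⟨hg.1, le_trans (le_of_lt (lt_of_le_of_lt hg.2 hx'.2)) hle⟩
    have hmemy : β ∈ G.filter (· ≤ y) := Finset.mem_filter.mpr ⟨hβ, hle⟩
    have hmemx : β ∉ G.filter (· ≤ x) := fun hmem =>
      absurd (Finset.mem_filter.mp hmem).2 (not_le.mpr hx'.2)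
    have hss : G.filter (· ≤ x) ⊂ G.filter (· ≤ y) :=
      (Finset.ssubset_iff_of_subset hsub).mpr ⟨β, hmemy, hmemx⟩
    have hcard : pieceIdx G x < pieceIdx G y := Finset.card_lt_card hss
    omega

/-! ### Cells of the grid -/

variable {I : Fin n → Set ℝ} {G : Finset ℝ}

/-- A cell of the grid `G` inside the brick with sides `I`. -/
noncomputable def gridCell (I : Fin n → Set ℝ) (G : Finset ℝ) (κ : Fin n → ℕ) :
    Set (Fin n → ℝ) :=
  univ.pi fun k => I k ∩ piece G (κ k)

theorem isBrick_gridCell (hI : ∀ k, (I k).OrdConnected ∧ Bornology.IsBounded (I k))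
    (G : Finset ℝ) (κ : Fin n → ℕ) : IsBrick (gridCell I G κ) :=
  ⟨fun k => I k ∩ piece G (κ k),
    fun k => ⟨(hI k).1.inter (piece_ordConnected G (κ k)), (hI k).2.subset inter_subset_left⟩,
    rfl⟩

theorem gridCell_subset (κ : Fin n → ℕ) : gridCell I G κ ⊆ univ.pi I :=
  fun _x hx k hk => (hx k hk).1

theorem mem_gridCell_self {x : Fin n → ℝ} (hx : x ∈ univ.pi I) :
    x ∈ gridCell I G fun k => pieceIdx G (x k) :=
  fun k hk => ⟨hx k hk, rfl⟩

theorem gridCell_disjoint {κ κ' : Fin n → ℕ} (h : κ ≠ κ') :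
    Disjoint (gridCell I G κ) (gridCell I G κ') := by
  rw [Set.disjoint_left]
  intro x h1 h2
  apply h; funext k
  have e1 : pieceIdx G (x k) = κ k := (h1 k (mem_univ k)).2
  have e2 : pieceIdx G (x k) = κ' k := (h2 k (mem_univ k)).2
  exact e1.symm.trans e2

theorem gridCell_convex (hI : ∀ k, (I k).OrdConnected) (κ : Fin n → ℕ) :
    Convex ℝ (gridCell I G κ) :=
  convex_pi fun k _ => ((hI k).inter (piece_ordConnected G (κ k))).convex

/-! ### Half-open covers -/

variable {M : ℕ}

/-- The half-open brick with corners `a j` and `b j`. -/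
def icoBrick (a b : Fin M → Fin n → ℝ) (j : Fin M) : Set (Fin n → ℝ) :=
  univ.pi fun k => Ico (a j k) (b j k)

theorem isBrick_icoBrick (a b : Fin M → Fin n → ℝ) (j : Fin M) : IsBrick (icoBrick a b j) :=
  ⟨fun k => Ico (a j k) (b j k), fun k => ⟨ordConnected_Ico, Metric.isBounded_Ico _ _⟩, rfl⟩

/-- The grid of all endpoints of the half-open cover. -/
noncomputable def gridOf (a b : Fin M → Fin n → ℝ) : Finset ℝ :=
  (Finset.univ.image fun p : Fin M × Fin n => a p.1 p.2) ∪
    (Finset.univ.image fun p : Fin M × Fin n => b p.1 p.2)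

theorem a_mem_gridOf (a b : Fin M → Fin n → ℝ) (j : Fin M) (k : Fin n) : a j k ∈ gridOf a b :=
  Finset.mem_union_left _ (Finset.mem_image.mpr ⟨(j, k), Finset.mem_univ _, rfl⟩)

theorem b_mem_gridOf (a b : Fin M → Fin n → ℝ) (j : Fin M) (k : Fin n) : b j k ∈ gridOf a b :=
  Finset.mem_union_right _ (Finset.mem_image.mpr ⟨(j, k), Finset.mem_univ _, rfl⟩)

theorem gridCell_absorb {a b : Fin M → Fin n → ℝ} {κ : Fin n → ℕ} (j : Fin M)
    (hne : (gridCell I (gridOf a b) κ ∩ icoBrick a b j).Nonempty) :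
    gridCell I (gridOf a b) κ ⊆ icoBrick a b j := by
  obtain ⟨x, hx1, hx2⟩ := hne
  intro y hy k _
  exact piece_subset_Ico (a_mem_gridOf a b j k) (b_mem_gridOf a b j k)
    (hx1 k (mem_univ k)).2 (hx2 k (mem_univ k)) (hy k (mem_univ k)).2

open scoped Classical in
/-- The coefficient of a cell in the approximating step function. -/
noncomputable def cellCoef (I : Fin n → Set ℝ) (A : Set (Fin n → ℝ))
    (a b : Fin M → Fin n → ℝ) (κ : Fin n → ℕ) : ℝ :=
  if ((gridCell I (gridOf a b) κ \ ⋃ j, icoBrick a b j) ∩ A).Nonempty then 1 else 0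

theorem cellCoef_mem (I : Fin n → Set ℝ) (A : Set (Fin n → ℝ))
    (a b : Fin M → Fin n → ℝ) (κ : Fin n → ℕ) :
    cellCoef I A a b κ = 0 ∨ cellCoef I A a b κ = 1 := by
  unfold cellCoef; split <;> simp

/-- The step function approximating `χ_A` adapted to a half-open cover of `∂A`. -/
noncomputable def mkStep (I : Fin n → Set ℝ)
    (hI : ∀ k, (I k).OrdConnected ∧ Bornology.IsBounded (I k))
    (A : Set (Fin n → ℝ)) (a b : Fin M → Fin n → ℝ) : StepRepr (univ.pi I) where
  M := Fintype.card (Fin n → Fin ((gridOf a b).card + 1))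
  c := fun j => cellCoef I A a b fun k =>
    ((Fintype.equivFin (Fin n → Fin ((gridOf a b).card + 1))).symm j k : ℕ)
  B := fun j => gridCell I (gridOf a b) fun k =>
    ((Fintype.equivFin (Fin n → Fin ((gridOf a b).card + 1))).symm j k : ℕ)
  isBrick := fun _ => isBrick_gridCell hI _ _
  subset := fun _ => gridCell_subset _

theorem mkStep_fn_eq (hI : ∀ k, (I k).OrdConnected ∧ Bornology.IsBounded (I k))
    (A : Set (Fin n → ℝ)) (a b : Fin M → Fin n → ℝ) {x : Fin n → ℝ} (hx : x ∈ univ.pi I) :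
    (mkStep I hI A a b).fn x = cellCoef I A a b fun k => pieceIdx (gridOf a b) (x k) := by
  classical
  set G := gridOf a b with hG
  have hlt : ∀ k, pieceIdx G (x k) < G.card + 1 := fun k => pieceIdx_lt G (x k)
  set κ0 : Fin n → Fin (G.card + 1) := fun k => ⟨pieceIdx G (x k), hlt k⟩ with hκ0
  set F : (Fin n → Fin (G.card + 1)) → ℝ := fun κ =>
    cellCoef I A a b (fun k => (κ k : ℕ)) *
      (gridCell I G fun k => (κ k : ℕ)).indicator (fun _ => (1 : ℝ)) x with hF
  have h1 : (mkStep I hI A a b).fn x = ∑ κ : Fin n → Fin (G.card + 1), F κ := by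
    rw [← Equiv.sum_comp (Fintype.equivFin (Fin n → Fin (G.card + 1))).symm F]
    rfl
  rw [h1]
  have h2 : ∑ κ : Fin n → Fin (G.card + 1), F κ = F κ0 := by
    refine Finset.sum_eq_single κ0 ?_ (fun h => absurd (Finset.mem_univ _) h)
    intro κ _ hκ
    have hxnot : x ∉ gridCell I G fun k => (κ k : ℕ) := by
      intro hmem
      apply hκ
      funext k
      exact Fin.ext ((hmem k (mem_univ k)).2.symm.trans rfl)
    rw [hF]
    simp only [Set.indicator_of_notMem hxnot, mul_zero]
  rw [h2, hF]
  have hxmem : x ∈ gridCell I G fun k => ((κ0 k : ℕ)) := mem_gridCell_self hx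
  simp only [Set.indicator_of_mem hxmem, mul_one]
  rfl

/-- A cell meeting `A` away from the cover is contained in `A ∪ U`. -/
theorem gridCell_subset_union (hI : ∀ k, (I k).OrdConnected ∧ Bornology.IsBounded (I k))
    {A : Set (Fin n → ℝ)} {a b : Fin M → Fin n → ℝ}
    (hfr : univ.pi I ∩ frontier A ⊆ ⋃ j, icoBrick a b j) {κ : Fin n → ℕ}
    (hpos : ((gridCell I (gridOf a b) κ \ ⋃ j, icoBrick a b j) ∩ A).Nonempty) :
    gridCell I (gridOf a b) κ ⊆ A ∪ ⋃ j, icoBrick a b j := by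
  classical
  set G := gridOf a b
  set C := gridCell I G κ with hC
  obtain ⟨y, ⟨hyc, hyU⟩, hyA⟩ := hpos
  by_cases hcap : ∃ j, (C ∩ icoBrick a b j).Nonempty
  · obtain ⟨j, hj⟩ := hcap
    exact fun z hz => Or.inr (mem_iUnion.mpr ⟨j, gridCell_absorb j hj hz⟩)
  · have hcellU : ∀ z ∈ C, z ∉ ⋃ j, icoBrick a b j := by
      intro z hz hzU
      obtain ⟨j, hj⟩ := mem_iUnion.mp hzU
      exact hcap ⟨j, z, hz, hj⟩
    have hfr' : ∀ z ∈ C, z ∉ frontier A := fun z hz hzf =>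
      hcellU z hz (hfr ⟨gridCell_subset κ hz, hzf⟩)
    have hsub : C ⊆ interior A ∪ (closure A)ᶜ := by
      intro z hz
      by_cases hzc : z ∈ closure A
      · left
        by_contra hzi
        exact hfr' z hz ⟨hzc, hzi⟩
      · exact Or.inr hzc
    have hyint : y ∈ interior A := by
      by_contra hyi
      exact hfr' y hyc ⟨subset_closure hyA, hyi⟩
    have hpc : IsPreconnected C := (gridCell_convex (fun k => (hI k).1) κ).isPreconnected
    have hCint : C ⊆ interior A :=
      hpc.subset_left_of_subset_union isOpen_interior isClosed_closure.isOpen_compl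
        (disjoint_compl_right.mono_left interior_subset_closure) hsub ⟨y, hyc, hyint⟩
    exact fun z hz => Or.inl (interior_subset (hCint hz))

theorem mkStep_fn_eq_indicator (hI : ∀ k, (I k).OrdConnected ∧ Bornology.IsBounded (I k))
    (A : Set (Fin n → ℝ)) (a b : Fin M → Fin n → ℝ)
    (hfr : univ.pi I ∩ frontier A ⊆ ⋃ j, icoBrick a b j)
    {x : Fin n → ℝ} (hx : x ∈ univ.pi I) (hxU : x ∉ ⋃ j, icoBrick a b j) :
    (mkStep I hI A a b).fn x = A.indicator (fun _ => (1 : ℝ)) x := by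
  classical
  rw [mkStep_fn_eq hI A a b hx]
  set κ0 : Fin n → ℕ := fun k => pieceIdx (gridOf a b) (x k) with hκ0
  have hxc : x ∈ gridCell I (gridOf a b) κ0 := mem_gridCell_self hx
  by_cases hxA : x ∈ A
  · rw [Set.indicator_of_mem hxA]
    have hpos : ((gridCell I (gridOf a b) κ0 \ ⋃ j, icoBrick a b j) ∩ A).Nonempty :=
      ⟨x, ⟨hxc, hxU⟩, hxA⟩
    simp only [cellCoef, if_pos hpos]
  · rw [Set.indicator_of_notMem hxA]
    have hneg : ¬ ((gridCell I (gridOf a b) κ0 \ ⋃ j, icoBrick a b j) ∩ A).Nonempty := by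
      intro hpos
      rcases gridCell_subset_union hI hfr hpos hxc with h | h
      exacts [hxA h, hxU h]
    simp only [cellCoef, if_neg hneg]

theorem mkStep_fn_abs_le (hI : ∀ k, (I k).OrdConnected ∧ Bornology.IsBounded (I k))
    (A : Set (Fin n → ℝ)) (a b : Fin M → Fin n → ℝ) {x : Fin n → ℝ} (hx : x ∈ univ.pi I) :
    |(mkStep I hI A a b).fn x| ≤ 1 := by
  rw [mkStep_fn_eq hI A a b hx]
  rcases cellCoef_mem I A a b (fun k => pieceIdx (gridOf a b) (x k)) with h | h <;>
    rw [h] <;> norm_num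

theorem brickVol_empty (hn : 1 ≤ n) : brickVol (∅ : Set (Fin n → ℝ)) = 0 := by
  rw [(isBrick_empty hn).brickVol_eq hn, measure_empty, ENNReal.toReal_zero]

open scoped Classical in
/-- The cell if its coefficient is `1`, otherwise the empty set. -/
noncomputable def posCell (I : Fin n → Set ℝ) (A : Set (Fin n → ℝ))
    (a b : Fin M → Fin n → ℝ) (κ : Fin n → ℕ) : Set (Fin n → ℝ) :=
  if ((gridCell I (gridOf a b) κ \ ⋃ j, icoBrick a b j) ∩ A).Nonempty then
    gridCell I (gridOf a b) κ else ∅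

theorem isBrick_posCell (hn : 1 ≤ n) (hI : ∀ k, (I k).OrdConnected ∧ Bornology.IsBounded (I k))
    (A : Set (Fin n → ℝ)) (a b : Fin M → Fin n → ℝ) (κ : Fin n → ℕ) :
    IsBrick (posCell I A a b κ) := by
  unfold posCell; split
  · exact isBrick_gridCell hI _ _
  · exact isBrick_empty hn

theorem posCell_subset (I : Fin n → Set ℝ) (A : Set (Fin n → ℝ))
    (a b : Fin M → Fin n → ℝ) (κ : Fin n → ℕ) :
    posCell I A a b κ ⊆ gridCell I (gridOf a b) κ := by
  unfold posCell; split
  · exact subset_rfl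
  · exact empty_subset _

theorem brickVol_posCell (hn : 1 ≤ n) (I : Fin n → Set ℝ) (A : Set (Fin n → ℝ))
    (a b : Fin M → Fin n → ℝ) (κ : Fin n → ℕ) :
    brickVol (posCell I A a b κ) =
      cellCoef I A a b κ * brickVol (gridCell I (gridOf a b) κ) := by
  unfold posCell cellCoef; split
  · rw [one_mul]
  · rw [zero_mul, brickVol_empty hn]

theorem posCell_subset_union (hI : ∀ k, (I k).OrdConnected ∧ Bornology.IsBounded (I k))
    {A : Set (Fin n → ℝ)} {a b : Fin M → Fin n → ℝ}
    (hfr : univ.pi I ∩ frontier A ⊆ ⋃ j, icoBrick a b j) (κ : Fin n → ℕ) :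
    posCell I A a b κ ⊆ A ∪ ⋃ j, icoBrick a b j := by
  unfold posCell; split
  · exact gridCell_subset_union hI hfr (by assumption)
  · exact empty_subset _

theorem subset_posCell_union {A : Set (Fin n → ℝ)} {a b : Fin M → Fin n → ℝ}
    (hA : A ⊆ univ.pi I) :
    A ⊆ (⋃ κ : Fin n → Fin ((gridOf a b).card + 1),
      posCell I A a b fun k => (κ k : ℕ)) ∪ ⋃ j, icoBrick a b j := by
  classical
  intro x hxA
  by_cases hxU : x ∈ ⋃ j, icoBrick a b j
  · exact Or.inr hxU
  · left
    set κ0 : Fin n → Fin ((gridOf a b).card + 1) :=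
      fun k => ⟨pieceIdx (gridOf a b) (x k), pieceIdx_lt _ _⟩ with hκ0
    have hxc : x ∈ gridCell I (gridOf a b) fun k => (κ0 k : ℕ) := mem_gridCell_self (hA hxA)
    refine mem_iUnion.mpr ⟨κ0, ?_⟩
    unfold posCell
    rw [if_pos ⟨x, ⟨hxc, hxU⟩, hxA⟩]
    exact hxc

theorem mkStep_integral_eq (hI : ∀ k, (I k).OrdConnected ∧ Bornology.IsBounded (I k))
    (A : Set (Fin n → ℝ)) (a b : Fin M → Fin n → ℝ) (hn : 1 ≤ n) :
    (mkStep I hI A a b).integral =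
      ∑ κ : Fin n → Fin ((gridOf a b).card + 1), brickVol (posCell I A a b fun k => (κ k : ℕ)) := by
  unfold StepRepr.integral mkStep
  simp only
  rw [← Equiv.sum_comp (Fintype.equivFin (Fin n → Fin ((gridOf a b).card + 1))).symm
    (fun κ => brickVol (posCell I A a b fun k => (κ k : ℕ)))]
  exact Finset.sum_congr rfl fun j _ => (brickVol_posCell hn I A a b _).symm

theorem volume_le_jordanOuterContent (hn : 1 ≤ n) {A T' : Set (Fin n → ℝ)}
    (hT : IsBrick T') (hA : A ⊆ T') : (volume A).toReal ≤ jordanOuterContent A := by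
  have hmem : brickVol T' ∈ {v : ℝ | ∃ (M : ℕ) (B : Fin M → Set (Fin n → ℝ)),
      (∀ j, IsBrick (B j)) ∧ A ⊆ (⋃ j, B j) ∧ v = ∑ j, brickVol (B j)} :=
    ⟨1, fun _ => T', fun _ => hT, by rw [Set.iUnion_const]; exact hA, by simp⟩
  refine le_csInf ⟨_, hmem⟩ ?_
  rintro v ⟨M, B, hB, hcov, rfl⟩
  have h1 : volume A ≤ ∑ j, volume (B j) :=
    le_trans (measure_mono hcov) (measure_iUnion_fintype_le _ _)
  have h2 : (∑ j, volume (B j)) ≠ ⊤ :=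
    (ENNReal.sum_lt_top.mpr fun j _ => (hB j).volume_lt_top).ne
  calc (volume A).toReal ≤ (∑ j, volume (B j)).toReal := ENNReal.toReal_mono h2 h1
    _ = ∑ j, brickVol (B j) := by
        rw [ENNReal.toReal_sum (fun j _ => ((hB j).volume_lt_top).ne)]
        exact Finset.sum_congr rfl fun j _ => ((hB j).brickVol_eq hn).symm

theorem jordan_le_mkStep_integral_add (hn : 1 ≤ n)
    (hI : ∀ k, (I k).OrdConnected ∧ Bornology.IsBounded (I k))
    {A : Set (Fin n → ℝ)} (a b : Fin M → Fin n → ℝ) (hA : A ⊆ univ.pi I) :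
    jordanOuterContent A ≤
      (mkStep I hI A a b).integral + ∑ j, brickVol (icoBrick a b j) := by
  classical
  set ι := Fin n → Fin ((gridOf a b).card + 1) with hι
  set N1 := Fintype.card ι with hN1
  set g : Fin N1 → Set (Fin n → ℝ) := fun j =>
    posCell I A a b fun k => (((Fintype.equivFin ι).symm j) k : ℕ) with hg
  set D : Fin (N1 + M) → Set (Fin n → ℝ) := fun i =>
    Sum.elim g (icoBrick a b) (finSumFinEquiv.symm i) with hD
  have hbricks : ∀ i, IsBrick (D i) := by
    intro i
    rcases h : finSumFinEquiv.symm i with j | j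
    · simpa [hD, h, hg] using isBrick_posCell hn hI A a b
        fun k => (((Fintype.equivFin ι).symm j) k : ℕ)
    · simpa [hD, h] using isBrick_icoBrick a b j
  have hcover : A ⊆ ⋃ i, D i := by
    intro x hxA
    rcases subset_posCell_union (I := I) (a := a) (b := b) hA hxA with h | h
    · obtain ⟨κ, hκ⟩ := mem_iUnion.mp h
      refine mem_iUnion.mpr ⟨finSumFinEquiv (Sum.inl ((Fintype.equivFin ι) κ)), ?_⟩
      simp only [hD, hg, Equiv.symm_apply_apply, Sum.elim_inl]
      simpa using hκ
    · obtain ⟨j, hj⟩ := mem_iUnion.mp h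
      refine mem_iUnion.mpr ⟨finSumFinEquiv (Sum.inr j), ?_⟩
      simp only [hD, Equiv.symm_apply_apply, Sum.elim_inr]
      exact hj
  have hsum : ∑ i, brickVol (D i) =
      (mkStep I hI A a b).integral + ∑ j, brickVol (icoBrick a b j) := by
    calc ∑ i, brickVol (D i)
        = ∑ s : Fin N1 ⊕ Fin M, brickVol (Sum.elim g (icoBrick a b) s) :=
          Equiv.sum_comp finSumFinEquiv.symm fun s => brickVol (Sum.elim g (icoBrick a b) s)
      _ = ∑ j : Fin N1, brickVol (g j) + ∑ j : Fin M, brickVol (icoBrick a b j) := by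
          rw [Fintype.sum_sum_type]
          simp only [Sum.elim_inl, Sum.elim_inr]
      _ = (mkStep I hI A a b).integral + ∑ j, brickVol (icoBrick a b j) := by
          congr 1
          rw [mkStep_integral_eq hI A a b hn,
            ← Equiv.sum_comp (Fintype.equivFin ι).symm
              (fun κ => brickVol (posCell I A a b fun k => (κ k : ℕ)))]
  have hbdd : BddBelow {v : ℝ | ∃ (M : ℕ) (B : Fin M → Set (Fin n → ℝ)),
      (∀ j, IsBrick (B j)) ∧ A ⊆ (⋃ j, B j) ∧ v = ∑ j, brickVol (B j)} := by
    refine ⟨0, ?_⟩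
    rintro v ⟨M', B', hB', _, rfl⟩
    exact Finset.sum_nonneg fun j _ => (hB' j).brickVol_nonneg hn
  have hmem : (mkStep I hI A a b).integral + ∑ j, brickVol (icoBrick a b j) ∈
      {v : ℝ | ∃ (M : ℕ) (B : Fin M → Set (Fin n → ℝ)),
        (∀ j, IsBrick (B j)) ∧ A ⊆ (⋃ j, B j) ∧ v = ∑ j, brickVol (B j)} :=
    ⟨N1 + M, D, hbricks, hcover, hsum.symm⟩
  exact csInf_le hbdd hmem

theorem mkStep_integral_le (hn : 1 ≤ n)
    (hI : ∀ k, (I k).OrdConnected ∧ Bornology.IsBounded (I k))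
    {A : Set (Fin n → ℝ)} (a b : Fin M → Fin n → ℝ) (hAb : Bornology.IsBounded A)
    (hfr : univ.pi I ∩ frontier A ⊆ ⋃ j, icoBrick a b j) :
    (mkStep I hI A a b).integral ≤
      (volume A).toReal + ∑ j, brickVol (icoBrick a b j) := by
  classical
  set ι := Fin n → Fin ((gridOf a b).card + 1) with hι
  set P : ι → Set (Fin n → ℝ) := fun κ => posCell I A a b fun k => (κ k : ℕ) with hP
  have hPdisj : Pairwise (Function.onFun Disjoint P) := by
    intro κ κ' hκκ
    have h : (fun k => (κ k : ℕ)) ≠ (fun k => (κ' k : ℕ)) := by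
      intro h
      apply hκκ
      funext k
      exact Fin.ext (congrFun h k)
    exact Disjoint.mono (posCell_subset I A a b _) (posCell_subset I A a b _)
      (gridCell_disjoint h)
  have hPmeas : ∀ κ, MeasurableSet (P κ) := fun κ =>
    (isBrick_posCell hn hI A a b _).measurableSet
  have hPlt : ∀ κ : ι, volume (P κ) ≠ ⊤ := fun κ =>
    ((isBrick_posCell hn hI A a b _).volume_lt_top).ne
  have h1 : (mkStep I hI A a b).integral = (volume (⋃ κ, P κ)).toReal := by
    rw [mkStep_integral_eq hI A a b hn, measure_iUnion hPdisj hPmeas, tsum_fintype]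
    rw [ENNReal.toReal_sum (fun κ _ => hPlt κ)]
    exact Finset.sum_congr rfl fun κ _ =>
      ((isBrick_posCell hn hI A a b _).brickVol_eq hn)
  have h2 : (⋃ κ, P κ) ⊆ A ∪ ⋃ j, icoBrick a b j :=
    iUnion_subset fun κ => posCell_subset_union hI hfr _
  have h3 : volume (⋃ κ, P κ) ≤ volume A + ∑ j, volume (icoBrick a b j) :=
    le_trans (measure_mono h2) (le_trans (measure_union_le _ _)
      (add_le_add_right (measure_iUnion_fintype_le _ _) _))
  have hfin : volume A + ∑ j, volume (icoBrick a b j) ≠ ⊤ := by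
    refine ENNReal.add_ne_top.mpr ⟨hAb.measure_lt_top.ne, ?_⟩
    exact (ENNReal.sum_lt_top.mpr fun j _ => (isBrick_icoBrick a b j).volume_lt_top).ne
  rw [h1]
  calc (volume (⋃ κ, P κ)).toReal ≤ (volume A + ∑ j, volume (icoBrick a b j)).toReal :=
        ENNReal.toReal_mono hfin h3
    _ = (volume A).toReal + ∑ j, brickVol (icoBrick a b j) := by
        rw [ENNReal.toReal_add hAb.measure_lt_top.ne
          ((ENNReal.sum_lt_top.mpr fun j _ => (isBrick_icoBrick a b j).volume_lt_top).ne),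
          ENNReal.toReal_sum (fun j _ => ((isBrick_icoBrick a b j).volume_lt_top).ne)]
        congr 1
        exact Finset.sum_congr rfl fun j _ => ((isBrick_icoBrick a b j).brickVol_eq hn).symm

theorem brickVol_icoBrick_eq (hn : 1 ≤ n) (a b : Fin M → Fin n → ℝ) (j : Fin M)
    (h : ∀ k, a j k ≤ b j k) :
    brickVol (icoBrick a b j) = ∏ k, (b j k - a j k) := by
  rw [(isBrick_icoBrick a b j).brickVol_eq hn]
  unfold icoBrick
  rw [volume_pi_pi, ENNReal.toReal_prod]
  exact Finset.prod_congr rfl fun k _ => by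
    rw [Real.volume_Ico, ENNReal.toReal_ofReal (sub_nonneg.mpr (h k))]

/-- Any Jordan-null set is covered by half-open bricks of small total volume. -/
theorem exists_hcover (hn : 1 ≤ n) {E : Set (Fin n → ℝ)} (hE : JordanNull E)
    {ε : ℝ} (hε : 0 < ε) :
    ∃ (M : ℕ) (a b : Fin M → Fin n → ℝ),
      E ⊆ (⋃ j, icoBrick a b j) ∧ (∑ j, brickVol (icoBrick a b j)) < ε := by
  obtain ⟨M, B, hB, hcov, hvol⟩ := hE (ε / 2) (by positivity)
  set lo : Fin M → Fin n → ℝ := fun j k => sInf ((fun x => x k) '' B j) with hlo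
  set hi : Fin M → Fin n → ℝ := fun j k => sSup ((fun x => x k) '' B j) with hhi
  have key : ∀ j, (∀ k, lo j k ≤ hi j k) ∧ ∀ x ∈ B j, ∀ k, x k ∈ Icc (lo j k) (hi j k) := by
    intro j
    obtain ⟨J, hJ, hBJ⟩ := hB j
    rcases (B j).eq_empty_or_nonempty with he | hne
    · constructor
      · intro k
        rw [hlo, hhi]
        simp only [he, image_empty, Real.sInf_empty, Real.sSup_empty, le_refl]
      · intro x hx
        rw [he] at hx
        exact absurd hx (notMem_empty x)
    · have himg : ∀ k, (fun x => x k) '' B j = J k := by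
        intro k
        rw [hBJ]
        exact eval_image_pi (mem_univ k) (hBJ ▸ hne)
      have hbb : ∀ k, BddBelow (J k) := fun k => (hJ k).2.bddBelow
      have hba : ∀ k, BddAbove (J k) := fun k => (hJ k).2.bddAbove
      have hJne : ∀ k, (J k).Nonempty := by
        obtain ⟨x, hx⟩ := hne
        rw [hBJ] at hx
        exact fun k => ⟨x k, hx k (mem_univ k)⟩
      constructor
      · intro k
        rw [hlo, hhi]
        simp only
        rw [himg k]
        exact csInf_le_csSup (hJne k) (hbb k) (hba k)
      · intro x hx k
        have hxk : x k ∈ J k := by rw [hBJ] at hx; exact hx k (mem_univ k)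
        constructor
        · rw [hlo]; simp only; rw [himg k]; exact csInf_le (hbb k) hxk
        · rw [hhi]; simp only; rw [himg k]; exact le_csSup (hba k) hxk
  set f : ℝ → ℝ := fun η => ∑ j, ∏ k, (hi j k - lo j k + η) with hfdef
  have hf0 : f 0 = ∑ j, brickVol (B j) := by
    rw [hfdef]
    simp only [add_zero]
    exact Finset.sum_congr rfl fun j _ => rfl
  have hcont : Continuous f := by
    apply continuous_finset_sum
    intro j _
    apply continuous_finset_prod
    intro k _
    exact (continuous_const.add continuous_id)
  have hlt : f 0 < ε := by rw [hf0]; linarith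
  have h1 : {η : ℝ | f η < ε} ∈ 𝓝 (0 : ℝ) := hcont.continuousAt (Iio_mem_nhds hlt)
  have h2 : ∀ᶠ η in 𝓝[>] (0 : ℝ), f η < ε ∧ 0 < η :=
    (eventually_nhdsWithin_of_eventually_nhds h1).and
      (eventually_mem_nhdsWithin.mono fun η hη => hη)
  obtain ⟨η, hηε, hη0⟩ := h2.exists
  refine ⟨M, lo, fun j k => hi j k + η, ?_, ?_⟩
  · intro x hx
    obtain ⟨j, hj⟩ := mem_iUnion.mp (hcov hx)
    refine mem_iUnion.mpr ⟨j, fun k _ => ?_⟩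
    obtain ⟨h1', h2'⟩ := (key j).2 x hj k
    exact ⟨h1', by dsimp only; linarith⟩
  · have heq : ∀ j : Fin M, brickVol (icoBrick lo (fun j k => hi j k + η) j) =
        ∏ k, (hi j k - lo j k + η) := by
      intro j
      rw [brickVol_icoBrick_eq hn lo (fun j k => hi j k + η) j
        (fun k => by have := (key j).1 k; linarith)]
      exact Finset.prod_congr rfl fun k _ => by ring
    calc (∑ j, brickVol (icoBrick lo (fun j k => hi j k + η) j))
        = f η := by rw [hfdef]; exact Finset.sum_congr rfl fun j _ => heq j
      _ < ε := hηε

/-- Refine a half-open cover of a Jordan null set into a nested one of small volume. -/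
theorem exists_hcover_nested (hn : 1 ≤ n) {E : Set (Fin n → ℝ)} (hE : JordanNull E)
    {ε : ℝ} (hε : 0 < ε) {M0 : ℕ} (a0 b0 : Fin M0 → Fin n → ℝ)
    (hcov0 : E ⊆ ⋃ j, icoBrick a0 b0 j) :
    ∃ (M : ℕ) (a b : Fin M → Fin n → ℝ),
      E ⊆ (⋃ j, icoBrick a b j) ∧ (⋃ j, icoBrick a b j) ⊆ (⋃ j, icoBrick a0 b0 j) ∧
        (∑ j, brickVol (icoBrick a b j)) < ε := by
  have hM0 : (0 : ℝ) < (M0 : ℝ) + 1 := by positivity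
  obtain ⟨MF, aF, bF, hFcov, hFvol⟩ := exists_hcover hn hE (div_pos hε hM0)
  set e := (finProdFinEquiv : Fin M0 × Fin MF ≃ Fin (M0 * MF)) with he
  set a : Fin (M0 * MF) → Fin n → ℝ :=
    fun p k => max (a0 (e.symm p).1 k) (aF (e.symm p).2 k) with ha
  set b : Fin (M0 * MF) → Fin n → ℝ :=
    fun p k => min (b0 (e.symm p).1 k) (bF (e.symm p).2 k) with hb
  have hinter : ∀ p : Fin (M0 * MF),
      icoBrick a b p = icoBrick a0 b0 (e.symm p).1 ∩ icoBrick aF bF (e.symm p).2 := by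
    intro p
    unfold icoBrick
    rw [← pi_inter_distrib]
    refine congrArg (univ.pi) (funext fun k => ?_)
    rw [Ico_inter_Ico]
  refine ⟨M0 * MF, a, b, ?_, ?_, ?_⟩
  · intro x hx
    obtain ⟨i, hi⟩ := mem_iUnion.mp (hcov0 hx)
    obtain ⟨j, hj⟩ := mem_iUnion.mp (hFcov hx)
    refine mem_iUnion.mpr ⟨e (i, j), ?_⟩
    rw [hinter]
    simp only [Equiv.symm_apply_apply]
    exact ⟨hi, hj⟩
  · intro x hx
    obtain ⟨p, hp⟩ := mem_iUnion.mp hx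
    rw [hinter] at hp
    exact mem_iUnion.mpr ⟨(e.symm p).1, hp.1⟩
  · have hle : ∀ p : Fin (M0 * MF),
        brickVol (icoBrick a b p) ≤ brickVol (icoBrick aF bF (e.symm p).2) := by
      intro p
      refine IsBrick.brickVol_mono hn (isBrick_icoBrick a b p)
        (isBrick_icoBrick aF bF (e.symm p).2) ?_
      rw [hinter]
      exact inter_subset_right
    have hFnonneg : (0:ℝ) ≤ ∑ j, brickVol (icoBrick aF bF j) :=
      Finset.sum_nonneg fun j _ => (isBrick_icoBrick aF bF j).brickVol_nonneg hn
    calc (∑ p, brickVol (icoBrick a b p))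
        ≤ ∑ p : Fin (M0 * MF), brickVol (icoBrick aF bF (e.symm p).2) :=
          Finset.sum_le_sum fun p _ => hle p
      _ = ∑ q : Fin M0 × Fin MF, brickVol (icoBrick aF bF q.2) := by
          rw [← Equiv.sum_comp e (fun p => brickVol (icoBrick aF bF (e.symm p).2))]
          simp only [Equiv.symm_apply_apply]
      _ = (M0 : ℝ) * ∑ j, brickVol (icoBrick aF bF j) := by
          rw [Fintype.sum_prod_type]
          simp [Finset.sum_const, nsmul_eq_mul]
      _ ≤ (M0 : ℝ) * (ε / ((M0 : ℝ) + 1)) := by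
          refine mul_le_mul_of_nonneg_left (le_of_lt hFvol) (by positivity)
      _ < ε := by
          rw [mul_div_assoc', div_lt_iff₀ hM0]
          nlinarith

end Aux

/-- If `A ⊆ T` is Jordan measurable, then its characteristic function is K-integrable
on `T` and its K-integral is the Jordan measure of `A`. -/
theorem hasKIntegral_indicator_jordanMeasurable {n : ℕ} (hn : 1 ≤ n)
    (T : Set (Fin n → ℝ)) (hT : IsBrick T) (A : Set (Fin n → ℝ)) (hA : A ⊆ T)
    (hAb : Bornology.IsBounded A) (hAj : JordanNull (frontier A)) :
    HasKIntegral T (A.indicator fun _ => (1 : ℝ)) (jordanOuterContent A) := by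
  classical
  obtain ⟨I, hI, hTI⟩ := hT
  subst hTI
  have step : ∀ (c : Σ M : ℕ, (Fin M → Fin n → ℝ) × (Fin M → Fin n → ℝ)) (m : ℕ),
      ∃ c' : Σ M : ℕ, (Fin M → Fin n → ℝ) × (Fin M → Fin n → ℝ),
        frontier A ⊆ (⋃ j, icoBrick c'.2.1 c'.2.2 j) ∧
        ((frontier A ⊆ ⋃ j, icoBrick c.2.1 c.2.2 j) →
          (⋃ j, icoBrick c'.2.1 c'.2.2 j) ⊆ ⋃ j, icoBrick c.2.1 c.2.2 j) ∧
        (∑ j, brickVol (icoBrick c'.2.1 c'.2.2 j)) < 1 / (m + 1 + 1) := by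
    intro c m
    have hpos : (0:ℝ) < 1 / (m + 1 + 1) := by positivity
    by_cases hc : frontier A ⊆ ⋃ j, icoBrick c.2.1 c.2.2 j
    · obtain ⟨M, a, b, h1, h2, h3⟩ := exists_hcover_nested hn hAj hpos c.2.1 c.2.2 hc
      exact ⟨⟨M, a, b⟩, h1, fun _ => h2, h3⟩
    · obtain ⟨M, a, b, h1, h3⟩ := exists_hcover hn hAj hpos
      exact ⟨⟨M, a, b⟩, h1, fun h => absurd h hc, h3⟩
  choose nxt hone htwo hthree using step
  obtain ⟨M0, a0, b0, hc0, hv0⟩ := exists_hcover hn hAj one_pos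
  set cv : ℕ → Σ M : ℕ, (Fin M → Fin n → ℝ) × (Fin M → Fin n → ℝ) :=
    fun m => Nat.rec ⟨M0, a0, b0⟩ (fun m c => nxt c m) m with hcv
  have hcvsucc : ∀ m, cv (m + 1) = nxt (cv m) m := fun m => rfl
  set U : ℕ → Set (Fin n → ℝ) := fun m => ⋃ j, icoBrick (cv m).2.1 (cv m).2.2 j with hUdef
  set V : ℕ → ℝ := fun m => ∑ j, brickVol (icoBrick (cv m).2.1 (cv m).2.2 j) with hVdef
  have hcov : ∀ m, frontier A ⊆ U m := by
    intro m
    cases m with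
    | zero => exact hc0
    | succ m =>
      rw [hUdef]
      simp only [hcvsucc m]
      exact hone (cv m) m
  have hvol : ∀ m, V m < 1 / ((m : ℝ) + 1) := by
    intro m
    cases m with
    | zero =>
      have h : V 0 < 1 := hv0
      simpa using h
    | succ m =>
      have h := hthree (cv m) m
      have hcast : ((m : ℝ) + 1 + 1) = (((m + 1 : ℕ) : ℝ) + 1) := by push_cast; ring
      rw [hcast] at h
      rw [hVdef]
      simp only [hcvsucc m]
      exact h
  have hnest : ∀ m, U (m + 1) ⊆ U m := by
    intro m
    rw [hUdef]
    simp only [hcvsucc m]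
    exact htwo (cv m) m (hcov m)
  have hmono : ∀ m m', m ≤ m' → U m' ⊆ U m := by
    intro m m' h
    induction h with
    | refl => exact subset_rfl
    | step h ih => exact subset_trans (hnest _) ih
  have hfr : ∀ m, univ.pi I ∩ frontier A ⊆ U m := fun m z hz => hcov m hz.2
  set g : ℕ → StepRepr (univ.pi I) := fun m => mkStep I hI A (cv m).2.1 (cv m).2.2 with hg
  refine ⟨g, ⟨⟨1, fun m x hx => mkStep_fn_abs_le hI A _ _ hx⟩, ?_⟩, ?_⟩
  · intro δ hδ
    obtain ⟨m0, hm0⟩ := exists_nat_one_div_lt hδ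
    refine ⟨(cv m0).1, fun j => icoBrick (cv m0).2.1 (cv m0).2.2 j ∩ univ.pi I, ?_, ?_, ?_⟩
    · intro j
      exact ⟨(isBrick_icoBrick _ _ j).inter ⟨I, hI, rfl⟩, inter_subset_right⟩
    · calc (∑ j, brickVol (icoBrick (cv m0).2.1 (cv m0).2.2 j ∩ univ.pi I))
          ≤ ∑ j, brickVol (icoBrick (cv m0).2.1 (cv m0).2.2 j) :=
            Finset.sum_le_sum fun j _ => IsBrick.brickVol_mono hn
              ((isBrick_icoBrick _ _ j).inter ⟨I, hI, rfl⟩) (isBrick_icoBrick _ _ j)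
              inter_subset_left
        _ < 1 / ((m0 : ℝ) + 1) := hvol m0
        _ < δ := hm0
    · rw [Metric.tendstoUniformlyOn_iff]
      intro ε hε
      filter_upwards [eventually_ge_atTop m0] with m hm
      intro x hx
      have hxT : x ∈ univ.pi I := hx.1
      have hxU0 : x ∉ U m0 := by
        intro hmem
        obtain ⟨j, hj⟩ := mem_iUnion.mp hmem
        exact hx.2 (mem_iUnion.mpr ⟨j, hj, hxT⟩)
      have hxU : x ∉ ⋃ j, icoBrick (cv m).2.1 (cv m).2.2 j :=
        fun h => hxU0 (hmono m0 m hm h)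
      have heq : (g m).fn x = A.indicator (fun _ => (1 : ℝ)) x :=
        mkStep_fn_eq_indicator hI A (cv m).2.1 (cv m).2.2 (hfr m) hxT hxU
      show dist (A.indicator (fun _ => (1 : ℝ)) x) ((g m).fn x) < ε
      rw [heq, dist_self]
      exact hε
  · have hVnonneg : ∀ m, 0 ≤ V m := fun m =>
      Finset.sum_nonneg fun j _ => (isBrick_icoBrick _ _ j).brickVol_nonneg hn
    have hV0 : Tendsto V atTop (𝓝 0) :=
      squeeze_zero hVnonneg (fun m => le_of_lt (hvol m))
        tendsto_one_div_add_atTop_nhds_zero_nat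
    have hub : ∀ m, (g m).integral ≤ jordanOuterContent A + V m := fun m =>
      le_trans (mkStep_integral_le hn hI (cv m).2.1 (cv m).2.2 hAb (hfr m))
        (add_le_add_left (volume_le_jordanOuterContent hn ⟨I, hI, rfl⟩ hA) _)
    have hlb : ∀ m, jordanOuterContent A - V m ≤ (g m).integral := fun m => by
      have h := jordan_le_mkStep_integral_add hn hI (cv m).2.1 (cv m).2.2 hA
      have hv : V m = ∑ j, brickVol (icoBrick (cv m).2.1 (cv m).2.2 j) := rfl
      have hgm : (g m).integral = (mkStep I hI A (cv m).2.1 (cv m).2.2).integral := rfl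
      rw [hv, hgm]
      linarith
    have hl : Tendsto (fun m => jordanOuterContent A - V m) atTop
        (𝓝 (jordanOuterContent A)) := by
      simpa using tendsto_const_nhds.sub hV0
    have hr : Tendsto (fun m => jordanOuterContent A + V m) atTop
        (𝓝 (jordanOuterContent A)) := by
      simpa using tendsto_const_nhds.add hV0
    exact tendsto_of_tendsto_of_tendsto_of_le_of_le hl hr hlb hub
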